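/- arXiv:2111.06843 — 2 statements merged into one kernel-verified Lean document; each statement's English description precedes it below -/
import Mathlib

section
/- Let M be a set, H a totally intransitive groupoid over M (α_H = β_H and H_m = H₂), and let G, E be local groupoids over M. Suppose H →(j) E →(ρ) G is an extension: j is an injective morphism over id_M with (j×j)⁻¹(E_m) ⊆ H_m, ρ is a surjective morphism over id_M, and j(H) = ρ⁻¹(ε_G(M)); suppose moreover E_m = (ρ×ρ)⁻¹(G_m). Let Σ_R be the set of morphisms s : G → E over id_M with ρ ∘ s = id_G, and let Σ_I be the set of pairs (•, Φ) where • is an external action of G on H and Φ : E → H ⋊ G is an isomorphism of local groupoids over id_M (a bijective morphism over id_M whose inverse is a morphism over id_M) satisfying Φ ∘ j = j_⋊ and ρ_⋊ ∘ Φ = ρ, with j_⋊(h) := (h, ε_G(β_H(h))) and ρ_⋊(h,g) := g. Then the assignment sending s ∈ Σ_R to the pair consisting of the external action g•h := j⁻¹(s(g) j(h) s(g)⁻¹) and the map Φ(e) := (j⁻¹(e · s(ρ(e)⁻¹)), ρ(e)), and the assignment sending (•, Φ) ∈ Σ_I to s := Φ⁻¹ ∘ s_⋊ with s_⋊(g)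 := (ε_H(α_G(g)), g), are well defined and mutually inverse bijections between Σ_R and Σ_I. -/
/-- A local groupoid over a set `M` (the algebraic axioms of a local Lie groupoid,
with smoothness omitted).  The multiplication is encoded as a total function `mul`
together with a predicate `Dm` describing the set `G_m` of multiplicable pairs;
the value of `mul` outside of `Dm` is irrelevant. -/
structure LocalGroupoid (M : Type*) (G : Type*) where
  src : G → M
  tgt : G → M
  e : M → G
  inv : G → G
  Dm : G → G → Prop
  mul : G → G → G
  comp_of_dm : ∀ {g₁ g₂ : G}, Dm g₁ g₂ → tgt g₁ = src g₂
  src_e : ∀ m, src (e m) = m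
  tgt_e : ∀ m, tgt (e m) = m
  dm_inv_inv : ∀ {g₁ g₂ : G}, Dm g₁ g₂ → Dm (inv g₂) (inv g₁)
  mul_inv_inv : ∀ {g₁ g₂ : G}, Dm g₁ g₂ → mul (inv g₂) (inv g₁) = inv (mul g₁ g₂)
  dm_e_src : ∀ g, Dm (e (src g)) g
  dm_e_tgt : ∀ g, Dm g (e (tgt g))
  e_src_mul : ∀ g, mul (e (src g)) g = g
  mul_e_tgt : ∀ g, mul g (e (tgt g)) = g
  dm_inv_right : ∀ g, Dm g (inv g)
  dm_inv_left : ∀ g, Dm (inv g) g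
  mul_inv_self : ∀ g, mul g (inv g) = e (src g)
  inv_mul_self : ∀ g, mul (inv g) g = e (tgt g)
  dm_assoc : ∀ {g₁ g₂ g₃ : G}, Dm g₁ g₂ → Dm g₂ g₃ → Dm g₁ (mul g₂ g₃) → Dm (mul g₁ g₂) g₃
  mul_assoc : ∀ {g₁ g₂ g₃ : G}, Dm g₁ g₂ → Dm g₂ g₃ → Dm g₁ (mul g₂ g₃) →
    mul (mul g₁ g₂) g₃ = mul g₁ (mul g₂ g₃)

namespace LocalGroupoid

/-- A morphism of local groupoids. -/
structure IsMorphism {M M' G G' : Type*} (A : LocalGroupoid M G) (B : LocalGroupoid M' G')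
    (F : G → G') : Prop where
  maps_e : ∀ m, ∃ m', F (A.e m) = B.e m'
  dm : ∀ {g₁ g₂ : G}, A.Dm g₁ g₂ → B.Dm (F g₁) (F g₂)
  map_mul : ∀ {g₁ g₂ : G}, A.Dm g₁ g₂ → F (A.mul g₁ g₂) = B.mul (F g₁) (F g₂)

/-- A morphism of local groupoids over `id_M` (the induced map on bases is the identity). -/
def IsMorphismOverId {M G G' : Type*} (A : LocalGroupoid M G) (B : LocalGroupoid M G')
    (F : G → G') : Prop :=
  IsMorphism A B F ∧ ∀ m, B.src (F (A.e m)) = m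

/-- A local groupoid is totally intransitive if `α = β`. -/
def TotallyIntransitive {M G : Type*} (A : LocalGroupoid M G) : Prop :=
  ∀ g, A.src g = A.tgt g

/-- A groupoid is a local groupoid in which all composable pairs are multiplicable,
i.e. `G_m = G₂`. -/
def IsGroupoid {M G : Type*} (A : LocalGroupoid M G) : Prop :=
  ∀ g₁ g₂, A.tgt g₁ = A.src g₂ → A.Dm g₁ g₂

/-- An external action of a local groupoid `G` on a totally intransitive groupoid `H`,
encoded as a total function `act` whose values on pairs with `β_G g ≠ α_H h` are
irrelevant. -/
def IsExternalAction {M GC HC : Type*} (AG : LocalGroupoid M GC) (AH : LocalGroupoid M HC)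
    (act : GC → HC → HC) : Prop :=
  (∀ g h, AG.tgt g = AH.src h → AH.src (act g h) = AG.src g) ∧
  (∀ g₁ g₂ h, AG.Dm g₁ g₂ → AG.tgt g₂ = AH.src h →
    act (AG.mul g₁ g₂) h = act g₁ (act g₂ h)) ∧
  (∀ g h₁ h₂, AG.tgt g = AH.src h₁ → AH.tgt h₁ = AH.src h₂ →
    act g (AH.mul h₁ h₂) = AH.mul (act g h₁) (act g h₂)) ∧
  (∀ h, act (AG.e (AH.src h)) h = h)

end LocalGroupoid

/-- The carrier of the semidirect product `H ⋊ G`: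
pairs `(h, g)` with `β_H(h) = α_G(g)`. -/
abbrev SDCarrier {M HC GC : Type*} (AH : LocalGroupoid M HC) (AG : LocalGroupoid M GC) :
    Type _ :=
  {p : HC × GC // AH.tgt p.1 = AG.src p.2}

/-- `P` is the semidirect product local groupoid `H ⋊ G` determined by the external
action `act`: its structure maps are characterized by the formulas of the paper
(the value of `P.mul` outside of `P_m` is irrelevant). -/
def IsSemidirectProduct {M HC GC : Type*} (AH : LocalGroupoid M HC) (AG : LocalGroupoid M GC)
    (act : GC → HC → HC) (P : LocalGroupoid M (SDCarrier AH AG)) : Prop :=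
  (∀ p, P.src p = AG.src p.val.2) ∧
  (∀ p, P.tgt p = AG.tgt p.val.2) ∧
  (∀ m, (P.e m).val = (AH.e m, AG.e m)) ∧
  (∀ p, (P.inv p).val = (AH.inv (act (AG.inv p.val.2) p.val.1), AG.inv p.val.2)) ∧
  (∀ p₁ p₂, P.Dm p₁ p₂ ↔ AG.Dm p₁.val.2 p₂.val.2) ∧
  (∀ p₁ p₂, P.Dm p₁ p₂ →
    (P.mul p₁ p₂).val =
      (AH.mul p₁.val.1 (act p₁.val.2 p₂.val.1), AG.mul p₁.val.2 p₂.val.2))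

/-- The canonical inclusion `j_⋊ : H → H ⋊ G`, `j_⋊(h) = (h, ε_G(β_H(h)))`. -/
def sdJ {M HC GC : Type*} (AH : LocalGroupoid M HC) (AG : LocalGroupoid M GC) (h : HC) :
    SDCarrier AH AG :=
  ⟨(h, AG.e (AH.tgt h)), (AG.src_e (AH.tgt h)).symm⟩

/-- The canonical projection `ρ_⋊ : H ⋊ G → G`, `ρ_⋊(h, g) = g`. -/
def sdRho {M HC GC : Type*} (AH : LocalGroupoid M HC) (AG : LocalGroupoid M GC)
    (p : SDCarrier AH AG) : GC :=
  p.val.2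

/-- The canonical splitting `s_⋊ : G → H ⋊ G`, `s_⋊(g) = (ε_H(α_G(g)), g)`. -/
def sdS {M HC GC : Type*} (AH : LocalGroupoid M HC) (AG : LocalGroupoid M GC) (g : GC) :
    SDCarrier AH AG :=
  ⟨(AH.e (AG.src g), g), AH.tgt_e (AG.src g)⟩


/-! ### Auxiliary general lemmas about local groupoids -/

namespace LocalGroupoid

section General
variable {M G : Type*} (A : LocalGroupoid M G)

theorem src_inv' (g : G) : A.src (A.inv g) = A.tgt g :=
  (A.comp_of_dm (A.dm_inv_right g)).symm

theorem tgt_inv' (g : G) : A.tgt (A.inv g) = A.src g :=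
  A.comp_of_dm (A.dm_inv_left g)

theorem dm_e_tgt' {g : G} {m : M} (h : A.tgt g = m) : A.Dm g (A.e m) := h ▸ A.dm_e_tgt g
theorem dm_e_src' {g : G} {m : M} (h : A.src g = m) : A.Dm (A.e m) g := h ▸ A.dm_e_src g
theorem mul_e_tgt' {g : G} {m : M} (h : A.tgt g = m) : A.mul g (A.e m) = g := h ▸ A.mul_e_tgt g
theorem e_src_mul' {g : G} {m : M} (h : A.src g = m) : A.mul (A.e m) g = g := h ▸ A.e_src_mul g

theorem dm_mul_inv {a b : G} (h : A.Dm a b) : A.Dm (A.mul a b) (A.inv b) := by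
  refine A.dm_assoc h (A.dm_inv_right b) ?_
  rw [A.mul_inv_self b]
  exact A.dm_e_tgt' (A.comp_of_dm h)

theorem mul_mul_inv {a b : G} (h : A.Dm a b) : A.mul (A.mul a b) (A.inv b) = a := by
  have hd : A.Dm a (A.mul b (A.inv b)) := by
    rw [A.mul_inv_self b]; exact A.dm_e_tgt' (A.comp_of_dm h)
  rw [A.mul_assoc h (A.dm_inv_right b) hd, A.mul_inv_self b,
    A.mul_e_tgt' (A.comp_of_dm h)]

theorem tgt_mul {a b : G} (h : A.Dm a b) : A.tgt (A.mul a b) = A.tgt b := by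
  rw [A.comp_of_dm (A.dm_mul_inv h), A.src_inv']

theorem src_mul {a b : G} (h : A.Dm a b) : A.src (A.mul a b) = A.src a := by
  have h2 := A.tgt_mul (A.dm_inv_inv h)
  rw [A.mul_inv_inv h, A.tgt_inv', A.tgt_inv'] at h2
  exact h2

theorem inv_unique {a b : G} (h : A.Dm a b) (h2 : A.mul a b = A.e (A.src a)) :
    b = A.inv a := by
  have hd : A.Dm (A.inv a) (A.mul a b) := by
    rw [h2]; exact A.dm_e_tgt' (A.tgt_inv' a)
  have := A.mul_assoc (A.dm_inv_left a) h hd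
  rw [A.inv_mul_self a, A.e_src_mul' (A.comp_of_dm h).symm, h2,
    A.mul_e_tgt' (A.tgt_inv' a)] at this
  exact this

theorem inv_inv' (g : G) : A.inv (A.inv g) = g :=
  (A.inv_unique (A.dm_inv_left g) (by rw [A.inv_mul_self g, A.src_inv'])).symm

theorem inv_e (m : M) : A.inv (A.e m) = A.e m :=
  (A.inv_unique (A.dm_e_tgt' (A.tgt_e m)) (by rw [A.mul_e_tgt' (A.tgt_e m), A.src_e])).symm

theorem dm_inv_mul {a b : G} (h : A.Dm a b) : A.Dm (A.inv a) (A.mul a b) := by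
  have h1 : A.Dm (A.inv (A.mul a b)) a := by
    have := A.dm_mul_inv (A.dm_inv_inv h)
    rwa [A.mul_inv_inv h, A.inv_inv'] at this
  have := A.dm_inv_inv h1
  rwa [A.inv_inv'] at this

theorem inv_mul_mul {a b : G} (h : A.Dm a b) : A.mul (A.inv a) (A.mul a b) = b := by
  have h1 : A.Dm (A.inv (A.mul a b)) a := by
    have := A.dm_mul_inv (A.dm_inv_inv h)
    rwa [A.mul_inv_inv h, A.inv_inv'] at this
  have h2 : A.mul (A.inv (A.mul a b)) a = A.inv b := by
    have := A.mul_mul_inv (A.dm_inv_inv h)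
    rwa [A.mul_inv_inv h, A.inv_inv'] at this
  have := A.mul_inv_inv h1
  rwa [h2, A.inv_inv', A.inv_inv'] at this

end General

section Morphism
variable {M G G' : Type*} {A : LocalGroupoid M G} {B : LocalGroupoid M G'} {F : G → G'}
  (hF : IsMorphismOverId A B F)
include hF

theorem moi_map_e (m : M) : F (A.e m) = B.e m := by
  obtain ⟨m', hm'⟩ := hF.1.maps_e m
  have := hF.2 m
  rw [hm', B.src_e] at this
  rw [hm', this]

theorem moi_src (g : G) : B.src (F g) = A.src g := by
  have := B.comp_of_dm (hF.1.dm (A.dm_e_src g))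
  rw [moi_map_e hF, B.tgt_e] at this; exact this.symm

theorem moi_tgt (g : G) : B.tgt (F g) = A.tgt g := by
  have := B.comp_of_dm (hF.1.dm (A.dm_e_tgt g))
  rwa [moi_map_e hF, B.src_e] at this

theorem moi_inv (g : G) : F (A.inv g) = B.inv (F g) :=
  B.inv_unique (hF.1.dm (A.dm_inv_right g))
    (by rw [← hF.1.map_mul (A.dm_inv_right g), A.mul_inv_self, moi_map_e hF, moi_src hF])

end Morphism

/-- Transport of a local groupoid structure along a (split) surjection. -/
def transport {M X Y : Type*} (A : LocalGroupoid M X) (φ : X → Y) (ψ : Y → X)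
    (h : ∀ x, ψ (φ x) = x) (h' : ∀ y, φ (ψ y) = y) : LocalGroupoid M Y where
  src y := A.src (ψ y)
  tgt y := A.tgt (ψ y)
  e m := φ (A.e m)
  inv y := φ (A.inv (ψ y))
  Dm y₁ y₂ := A.Dm (ψ y₁) (ψ y₂)
  mul y₁ y₂ := φ (A.mul (ψ y₁) (ψ y₂))
  comp_of_dm hd := A.comp_of_dm hd
  src_e m := by simp [h, A.src_e]
  tgt_e m := by simp [h, A.tgt_e]
  dm_inv_inv hd := by simpa [h] using A.dm_inv_inv hd
  mul_inv_inv hd := by simp [h]; rw [A.mul_inv_inv hd]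
  dm_e_src y := by simpa [h] using A.dm_e_src (ψ y)
  dm_e_tgt y := by simpa [h] using A.dm_e_tgt (ψ y)
  e_src_mul y := by simp [h, A.e_src_mul, h']
  mul_e_tgt y := by simp [h, A.mul_e_tgt, h']
  dm_inv_right y := by simpa [h] using A.dm_inv_right (ψ y)
  dm_inv_left y := by simpa [h] using A.dm_inv_left (ψ y)
  mul_inv_self y := by simp [h, A.mul_inv_self]
  inv_mul_self y := by simp [h, A.inv_mul_self]
  dm_assoc h12 h23 h123 := by
    simp only [h] at *
    exact A.dm_assoc h12 h23 h123
  mul_assoc h12 h23 h123 := by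
    simp only [h] at *
    rw [A.mul_assoc h12 h23 h123]

end LocalGroupoid


open LocalGroupoid

/-- For a split-compatible extension `H →(j) E →(ρ) G` of local groupoids over `M`
(`H` a totally intransitive groupoid, `j(H) = ker ρ`, `E_m = (ρ×ρ)⁻¹(G_m)`), the
assignments `s ↦ (•, Φ)` (with `g • h = j⁻¹(s(g) j(h) s(g)⁻¹)` and
`Φ(e) = (j⁻¹(e · s(ρ(e)⁻¹)), ρ(e))`) and `(•, Φ) ↦ Φ⁻¹ ∘ s_⋊` are well defined and
mutually inverse bijections between the right splittings `Σ_R` of the extension and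
the isomorphisms `Σ_I` with semidirect product extensions. -/
theorem splittings_biject_with_semidirect_isomorphisms {M HC EC GC : Type*}
    (AH : LocalGroupoid M HC) (AE : LocalGroupoid M EC) (AG : LocalGroupoid M GC)
    (hTI : LocalGroupoid.TotallyIntransitive AH)
    (hHGpd : LocalGroupoid.IsGroupoid AH)
    (j : HC → EC) (hj : LocalGroupoid.IsMorphismOverId AH AE j)
    (hjinj : Function.Injective j)
    (hjdm : ∀ h₁ h₂, AE.Dm (j h₁) (j h₂) → AH.Dm h₁ h₂)
    (ρ : EC → GC) (hρ : LocalGroupoid.IsMorphismOverId AE AG ρ)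
    (hρsurj : Function.Surjective ρ)
    (hker : ∀ x, (∃ h, j h = x) ↔ (∃ m, ρ x = AG.e m))
    (hEm : ∀ x₁ x₂, AE.Dm x₁ x₂ ↔ AG.Dm (ρ x₁) (ρ x₂)) :
    -- the forward assignment is well defined, and following it with the backward
    -- assignment recovers the splitting `s`
    (∀ s : GC → EC, LocalGroupoid.IsMorphismOverId AG AE s → (∀ g, ρ (s g) = g) →
      ∃ (act : GC → HC → HC) (P : LocalGroupoid M (SDCarrier AH AG))
        (Φ : EC → SDCarrier AH AG),
        (∀ g h, AG.tgt g = AH.src h →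
          j (act g h) = AE.mul (AE.mul (s g) (j h)) (AE.inv (s g))) ∧
        LocalGroupoid.IsExternalAction AG AH act ∧
        IsSemidirectProduct AH AG act P ∧
        (∀ x, j ((Φ x).val.1) = AE.mul x (s (AG.inv (ρ x))) ∧ (Φ x).val.2 = ρ x) ∧
        Function.Bijective Φ ∧
        LocalGroupoid.IsMorphismOverId AE P Φ ∧
        (∀ ψ : SDCarrier AH AG → EC,
          Function.LeftInverse ψ Φ → Function.RightInverse ψ Φ →
          LocalGroupoid.IsMorphismOverId P AE ψ) ∧
        (∀ h, Φ (j h) = sdJ AH AG h) ∧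
        (∀ x, sdRho AH AG (Φ x) = ρ x) ∧
        (∀ ψ : SDCarrier AH AG → EC,
          Function.LeftInverse ψ Φ → Function.RightInverse ψ Φ →
          (fun g => ψ (sdS AH AG g)) = s)) ∧
    -- the backward assignment is well defined, and following it with the forward
    -- assignment recovers `(act, Φ)`
    (∀ (act : GC → HC → HC) (P : LocalGroupoid M (SDCarrier AH AG))
        (Φ : EC → SDCarrier AH AG) (ψ : SDCarrier AH AG → EC),
      LocalGroupoid.IsExternalAction AG AH act →
      IsSemidirectProduct AH AG act P →
      LocalGroupoid.IsMorphismOverId AE P Φ →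
      Function.Bijective Φ →
      Function.LeftInverse ψ Φ → Function.RightInverse ψ Φ →
      LocalGroupoid.IsMorphismOverId P AE ψ →
      (∀ h, Φ (j h) = sdJ AH AG h) →
      (∀ x, sdRho AH AG (Φ x) = ρ x) →
      (LocalGroupoid.IsMorphismOverId AG AE (fun g => ψ (sdS AH AG g)) ∧
        (∀ g, ρ (ψ (sdS AH AG g)) = g) ∧
        (∀ g h, AG.tgt g = AH.src h →
          j (act g h) =
            AE.mul (AE.mul (ψ (sdS AH AG g)) (j h)) (AE.inv (ψ (sdS AH AG g)))) ∧
        (∀ x, j ((Φ x).val.1) = AE.mul x (ψ (sdS AH AG (AG.inv (ρ x))))))) := by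
  classical
  -- shared facts
  have hρinv : ∀ x, ρ (AE.inv x) = AG.inv (ρ x) := fun x => moi_inv hρ x
  have hρmul : ∀ {x y : EC}, AE.Dm x y → ρ (AE.mul x y) = AG.mul (ρ x) (ρ y) :=
    fun hd => hρ.1.map_mul hd
  have hDm' : ∀ {x y : EC}, AG.Dm (ρ x) (ρ y) → AE.Dm x y := fun {x y} hd => (hEm x y).2 hd
  have hρj : ∀ h, ρ (j h) = AG.e (AH.src h) := by
    intro h
    obtain ⟨m, hm⟩ := (hker (j h)).1 ⟨h, rfl⟩
    have h2 : AG.src (ρ (j h)) = AH.src h := by rw [moi_src hρ, moi_src hj]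
    rw [hm, AG.src_e] at h2
    rw [hm, h2]
  have hkermem : ∀ x m, ρ x = AG.e m → ∃ h, j h = x := fun x m hm => (hker x).2 ⟨m, hm⟩
  constructor
  · -- forward direction
    intro s hs hρs
    have hsinv : ∀ g, s (AG.inv g) = AE.inv (s g) := fun g => moi_inv hs g
    -- the external action
    have key : ∀ g h, AG.tgt g = AH.src h →
        AE.Dm (s g) (j h) ∧ AE.Dm (AE.mul (s g) (j h)) (AE.inv (s g)) ∧
        ρ (AE.mul (AE.mul (s g) (j h)) (AE.inv (s g))) = AG.e (AG.src g) := by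
      intro g h hc
      have hDgj : AE.Dm (s g) (j h) := hDm' (by
        rw [hρs, hρj, ← hc]; exact AG.dm_e_tgt g)
      have hρm1 : ρ (AE.mul (s g) (j h)) = g := by
        rw [hρmul hDgj, hρs, hρj, ← hc, AG.mul_e_tgt]
      have hD2 : AE.Dm (AE.mul (s g) (j h)) (AE.inv (s g)) := hDm' (by
        rw [hρm1, hρinv, hρs]; exact AG.dm_inv_right g)
      exact ⟨hDgj, hD2, by rw [hρmul hD2, hρm1, hρinv, hρs, AG.mul_inv_self]⟩
    have keyex : ∀ g h, AG.tgt g = AH.src h → ∃ h',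
        j h' = AE.mul (AE.mul (s g) (j h)) (AE.inv (s g)) ∧ AH.src h' = AG.src g := by
      intro g h hc
      obtain ⟨hDgj, hD2, hρ2⟩ := key g h hc
      obtain ⟨h', hh'⟩ := hkermem _ _ hρ2
      refine ⟨h', hh', ?_⟩
      rw [← moi_src hj, hh', AE.src_mul hD2, AE.src_mul hDgj, moi_src hs]
    obtain ⟨act, hact⟩ : ∃ act : GC → HC → HC, ∀ g h, AG.tgt g = AH.src h →
        j (act g h) = AE.mul (AE.mul (s g) (j h)) (AE.inv (s g)) ∧
        AH.src (act g h) = AG.src g := by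
      choose f hf1 hf2 using keyex
      refine ⟨fun g h => if hc : AG.tgt g = AH.src h then f g h hc else h, fun g h hc => ?_⟩
      simp only [dif_pos hc]
      exact ⟨hf1 g h hc, hf2 g h hc⟩
    -- the map Φ₁ = j⁻¹(x · s(ρ(x)⁻¹))
    have hDxs : ∀ x, AE.Dm x (s (AG.inv (ρ x))) := fun x => hDm' (by
      rw [hρs]; exact AG.dm_inv_right (ρ x))
    obtain ⟨Φ₁, hΦ₁⟩ : ∃ f : EC → HC, ∀ x, j (f x) = AE.mul x (s (AG.inv (ρ x))) := by
      have : ∀ x, ∃ h, j h = AE.mul x (s (AG.inv (ρ x))) := by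
        intro x
        refine hkermem _ (AG.src (ρ x)) ?_
        rw [hρmul (hDxs x), hρs, AG.mul_inv_self]
      choose f hf using this
      exact ⟨f, hf⟩
    have hcond : ∀ x, AH.tgt (Φ₁ x) = AG.src (ρ x) := by
      intro x
      have h1 : AE.tgt (j (Φ₁ x)) = AE.tgt (AE.mul x (s (AG.inv (ρ x)))) := by rw [hΦ₁]
      rw [moi_tgt hj, AE.tgt_mul (hDxs x), moi_tgt hs, AG.tgt_inv'] at h1
      exact h1
    set Φ : EC → SDCarrier AH AG := fun x => ⟨(Φ₁ x, ρ x), hcond x⟩ with hΦdef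
    set Ψ : SDCarrier AH AG → EC := fun p => AE.mul (j p.val.1) (s p.val.2) with hΨdef
    -- basic facts about Ψ
    have hDΨ : ∀ p : SDCarrier AH AG, AE.Dm (j p.val.1) (s p.val.2) := by
      intro p
      refine hDm' ?_
      rw [hρs, hρj, hTI p.val.1, p.prop]
      exact AG.dm_e_src p.val.2
    have hρΨ : ∀ p, ρ (Ψ p) = p.val.2 := by
      intro p
      show ρ (AE.mul (j p.val.1) (s p.val.2)) = p.val.2
      rw [hρmul (hDΨ p), hρs, hρj, hTI p.val.1, p.prop, AG.e_src_mul]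
    have hΨΦ : ∀ x, Ψ (Φ x) = x := by
      intro x
      have hd : AE.Dm x (AE.inv (s (ρ x))) := hDm' (by
        rw [hρinv, hρs]; exact AG.dm_inv_right (ρ x))
      have h3 := AE.mul_mul_inv hd
      rw [AE.inv_inv'] at h3
      calc Ψ (Φ x) = AE.mul (j (Φ₁ x)) (s (ρ x)) := rfl
        _ = AE.mul (AE.mul x (s (AG.inv (ρ x)))) (s (ρ x)) := by rw [hΦ₁]
        _ = AE.mul (AE.mul x (AE.inv (s (ρ x)))) (s (ρ x)) := by rw [hsinv]
        _ = x := h3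
    have hΦΨ : ∀ p, Φ (Ψ p) = p := by
      intro p
      have h2 : ρ (Ψ p) = p.val.2 := hρΨ p
      have h1 : Φ₁ (Ψ p) = p.val.1 := by
        apply hjinj
        rw [hΦ₁, h2, hsinv]
        exact AE.mul_mul_inv (hDΨ p)
      apply Subtype.ext
      show (Φ₁ (Ψ p), ρ (Ψ p)) = p.val
      rw [h1, h2]
    refine ⟨act, AE.transport Φ Ψ hΨΦ hΦΨ, Φ, fun g h hc => (hact g h hc).1,
      ?_, ?_, ?_, ?_, ?_, ?_, ?_, ?_, ?_⟩
    · -- external action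
      refine ⟨fun g h hc => (hact g h hc).2, ?_, ?_, ?_⟩
      · -- compatibility with multiplication in G
        intro g₁ g₂ h hd hc
        have hc' : AG.tgt (AG.mul g₁ g₂) = AH.src h := by rw [AG.tgt_mul hd, hc]
        have hc'' : AG.tgt g₁ = AH.src (act g₂ h) := by
          rw [(hact g₂ h hc).2, AG.comp_of_dm hd]
        apply hjinj
        rw [(hact _ h hc').1, (hact g₁ _ hc'').1, (hact g₂ h hc).1]
        have hρA : ρ (j h) = AG.e (AG.tgt g₂) := by rw [hρj, hc]
        have d1 : AE.Dm (s g₂) (j h) := hDm' (by rw [hρs, hρA]; exact AG.dm_e_tgt g₂)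
        have m1 : ρ (AE.mul (s g₂) (j h)) = g₂ := by
          rw [hρmul d1, hρs, hρA, AG.mul_e_tgt]
        have d2 : AE.Dm (s g₁) (AE.mul (s g₂) (j h)) := hDm' (by rw [hρs, m1]; exact hd)
        have m2 : ρ (AE.mul (s g₁) (AE.mul (s g₂) (j h))) = AG.mul g₁ g₂ := by
          rw [hρmul d2, hρs, m1]
        have d3 : AE.Dm (s g₁) (s g₂) := hDm' (by rw [hρs, hρs]; exact hd)
        have d4 : AE.Dm (AE.mul (s g₁) (s g₂)) (j h) := hDm' (by
          rw [hρmul d3, hρs, hρs, hρA]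
          exact AG.dm_e_tgt' (AG.tgt_mul hd))
        have step1 : AE.mul (AE.mul (s g₁) (s g₂)) (j h)
            = AE.mul (s g₁) (AE.mul (s g₂) (j h)) := AE.mul_assoc d3 d1 d2
        have d5 : AE.Dm (AE.mul (s g₁) (AE.mul (s g₂) (j h))) (AE.inv (s g₂)) := hDm' (by
          rw [m2, hρinv, hρs]; exact AG.dm_mul_inv hd)
        have d6 : AE.Dm (AE.inv (s g₂)) (AE.inv (s g₁)) := AE.dm_inv_inv d3
        have d7 : AE.Dm (AE.mul (s g₁) (AE.mul (s g₂) (j h)))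
            (AE.mul (AE.inv (s g₂)) (AE.inv (s g₁))) := hDm' (by
          rw [m2, hρmul d6, hρinv, hρinv, hρs, hρs, AG.mul_inv_inv hd]
          exact AG.dm_inv_right _)
        have step2 := AE.mul_assoc d5 d6 d7
        have d8 : AE.Dm (AE.mul (s g₂) (j h)) (AE.inv (s g₂)) := hDm' (by
          rw [m1, hρinv, hρs]; exact AG.dm_inv_right g₂)
        have d9 : AE.Dm (s g₁) (AE.mul (AE.mul (s g₂) (j h)) (AE.inv (s g₂))) := hDm' (by
          rw [hρs, hρmul d8, m1, hρinv, hρs, AG.mul_inv_self]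
          exact AG.dm_e_tgt' (AG.comp_of_dm hd))
        have step3 := AE.mul_assoc d2 d8 d9
        rw [hs.1.map_mul hd, ← AE.mul_inv_inv d3, step1, ← step2, step3]
      · -- compatibility with multiplication in H
        intro g h₁ h₂ hc hcc
        have hdH : AH.Dm h₁ h₂ := hHGpd _ _ hcc
        have hc2 : AG.tgt g = AH.src h₂ := by rw [hc, hTI h₁, hcc]
        have hc3 : AG.tgt g = AH.src (AH.mul h₁ h₂) := by rw [AH.src_mul hdH, hc]
        have hdact : AH.Dm (act g h₁) (act g h₂) := by
          apply hHGpd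
          rw [← hTI, (hact g h₁ hc).2, (hact g h₂ hc2).2]
        apply hjinj
        rw [(hact g _ hc3).1, hj.1.map_mul hdact, (hact g h₁ hc).1, (hact g h₂ hc2).1,
          hj.1.map_mul hdH]
        have hρA1 : ρ (j h₁) = AG.e (AG.tgt g) := by rw [hρj, hc]
        have hρA2 : ρ (j h₂) = AG.e (AG.tgt g) := by rw [hρj, hc2]
        have dB1 : AE.Dm (s g) (j h₁) := hDm' (by rw [hρs, hρA1]; exact AG.dm_e_tgt g)
        have dB2 : AE.Dm (s g) (j h₂) := hDm' (by rw [hρs, hρA2]; exact AG.dm_e_tgt g)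
        have dA12 : AE.Dm (j h₁) (j h₂) := hj.1.dm hdH
        have m12 : ρ (AE.mul (j h₁) (j h₂)) = AG.e (AG.tgt g) := by
          rw [hρmul dA12, hρA1, hρA2, AG.mul_e_tgt' (AG.tgt_e _)]
        have dB12 : AE.Dm (s g) (AE.mul (j h₁) (j h₂)) := hDm' (by
          rw [hρs, m12]; exact AG.dm_e_tgt g)
        have mB1 : ρ (AE.mul (s g) (j h₁)) = g := by rw [hρmul dB1, hρs, hρA1, AG.mul_e_tgt]
        have mB2 : ρ (AE.mul (s g) (j h₂)) = g := by rw [hρmul dB2, hρs, hρA2, AG.mul_e_tgt]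
        have dX1 : AE.Dm (AE.mul (s g) (j h₁)) (AE.inv (s g)) := hDm' (by
          rw [mB1, hρinv, hρs]; exact AG.dm_inv_right g)
        have dX2 : AE.Dm (AE.mul (s g) (j h₂)) (AE.inv (s g)) := hDm' (by
          rw [mB2, hρinv, hρs]; exact AG.dm_inv_right g)
        have mX1 : ρ (AE.mul (AE.mul (s g) (j h₁)) (AE.inv (s g))) = AG.e (AG.src g) := by
          rw [hρmul dX1, mB1, hρinv, hρs, AG.mul_inv_self]
        have e1 : AE.mul (AE.inv (s g)) (AE.mul (s g) (j h₂)) = j h₂ := AE.inv_mul_mul dB2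
        have da : AE.Dm (AE.mul (AE.mul (s g) (j h₁)) (AE.inv (s g))) (AE.mul (s g) (j h₂)) :=
          hDm' (by rw [mX1, mB2]; exact AG.dm_e_src g)
        have dc : AE.Dm (AE.mul (AE.mul (s g) (j h₁)) (AE.inv (s g)))
            (AE.mul (AE.mul (s g) (j h₂)) (AE.inv (s g))) := hDm' (by
          rw [mX1, hρmul dX2, mB2, hρinv, hρs, AG.mul_inv_self]
          exact AG.dm_e_tgt' (AG.tgt_e _))
        have stepr1 := AE.mul_assoc da dX2 dc
        have de : AE.Dm (AE.inv (s g)) (AE.mul (s g) (j h₂)) := hDm' (by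
          rw [hρinv, hρs, mB2]; exact AG.dm_inv_left g)
        have df : AE.Dm (AE.mul (s g) (j h₁))
            (AE.mul (AE.inv (s g)) (AE.mul (s g) (j h₂))) := hDm' (by
          rw [e1, mB1, hρA2]; exact AG.dm_e_tgt g)
        have stepr2 := AE.mul_assoc dX1 de df
        have step3 := AE.mul_assoc dB1 dA12 dB12
        rw [← stepr1, stepr2, e1, ← step3]
      · -- unit acts trivially
        intro h
        have hc : AG.tgt (AG.e (AH.src h)) = AH.src h := AG.tgt_e _
        apply hjinj
        rw [(hact _ h hc).1, moi_map_e hs, AE.inv_e,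
          AE.e_src_mul' (moi_src hj h),
          AE.mul_e_tgt' (by rw [moi_tgt hj, ← hTI h])]
    · -- semidirect product conditions
      refine ⟨?_, ?_, ?_, ?_, ?_, ?_⟩
      · intro p
        show AE.src (AE.mul (j p.val.1) (s p.val.2)) = AG.src p.val.2
        rw [AE.src_mul (hDΨ p), moi_src hj, hTI, p.prop]
      · intro p
        show AE.tgt (AE.mul (j p.val.1) (s p.val.2)) = AG.tgt p.val.2
        rw [AE.tgt_mul (hDΨ p), moi_tgt hs]
      · intro m
        show (Φ (AE.e m)).val = (AH.e m, AG.e m)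
        have hρe : ρ (AE.e m) = AG.e m := moi_map_e hρ m
        have h1 : Φ₁ (AE.e m) = AH.e m := by
          apply hjinj
          rw [hΦ₁, hρe, AG.inv_e, moi_map_e hs, moi_map_e hj,
            AE.mul_e_tgt' (AE.tgt_e m)]
        show (Φ₁ (AE.e m), ρ (AE.e m)) = (AH.e m, AG.e m)
        rw [h1, hρe]
      · -- inversion formula
        rintro ⟨⟨h, g⟩, hp⟩
        have hp' : AH.tgt h = AG.src g := hp
        have hsrch : AH.src h = AG.src g := by rw [hTI]; exact hp'
        have hcinv : AG.tgt (AG.inv g) = AH.src h := by rw [AG.tgt_inv', hsrch]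
        have hρA : ρ (j h) = AG.e (AG.src g) := by rw [hρj, hsrch]
        have dΨ' : AE.Dm (j h) (s g) := hDΨ ⟨(h, g), hp⟩
        have hρΨp : ρ (AE.mul (j h) (s g)) = g := hρΨ ⟨(h, g), hp⟩
        have h2 : ρ (AE.inv (AE.mul (j h) (s g))) = AG.inv g := by rw [hρinv, hρΨp]
        have h1 : Φ₁ (AE.inv (AE.mul (j h) (s g))) = AH.inv (act (AG.inv g) h) := by
          apply hjinj
          rw [hΦ₁, h2, AG.inv_inv', moi_inv hj, (hact _ h hcinv).1, hsinv, AE.inv_inv']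
          -- goal : inv(jh·sg)·sg = inv((inv(sg)·jh)·sg)
          have dA : AE.Dm (AE.inv (s g)) (j h) := hDm' (by
            rw [hρinv, hρs, hρA]
            exact AG.dm_e_tgt' (AG.tgt_inv' g))
          have mA : ρ (AE.mul (AE.inv (s g)) (j h)) = AG.inv g := by
            rw [hρmul dA, hρinv, hρs, hρA, AG.mul_e_tgt' (AG.tgt_inv' g)]
          have dB : AE.Dm (AE.mul (AE.inv (s g)) (j h)) (s g) := hDm' (by
            rw [mA, hρs]; exact AG.dm_inv_left g)
          rw [← AE.mul_inv_inv dB, ← AE.mul_inv_inv dA, AE.inv_inv',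
            ← AE.mul_inv_inv dΨ']
          -- goal : (inv(sg)·inv(jh))·sg = inv(sg)·(inv(jh)·sg)
          have dm1 : AE.Dm (AE.inv (s g)) (AE.inv (j h)) := AE.dm_inv_inv dΨ'
          have dm2 : AE.Dm (AE.inv (j h)) (s g) := hDm' (by
            rw [hρinv, hρA, AG.inv_e, hρs]
            exact AG.dm_e_src g)
          have dm3 : AE.Dm (AE.inv (s g)) (AE.mul (AE.inv (j h)) (s g)) := hDm' (by
            rw [hρinv, hρmul dm2, hρinv, hρA, AG.inv_e, hρs, AG.e_src_mul]
            exact AG.dm_inv_left g)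
          exact AE.mul_assoc dm1 dm2 dm3
        show (Φ₁ (AE.inv (AE.mul (j h) (s g))), ρ (AE.inv (AE.mul (j h) (s g)))) = _
        rw [h1, h2]
      · intro p₁ p₂
        show AE.Dm (AE.mul (j p₁.val.1) (s p₁.val.2)) (AE.mul (j p₂.val.1) (s p₂.val.2)) ↔ _
        rw [hEm, hρΨ p₁, hρΨ p₂]
      · -- multiplication formula
        rintro ⟨⟨h₁, g₁⟩, hp₁⟩ ⟨⟨h₂, g₂⟩, hp₂⟩ hd
        have hp₁' : AH.tgt h₁ = AG.src g₁ := hp₁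
        have hp₂' : AH.tgt h₂ = AG.src g₂ := hp₂
        have hdG : AG.Dm g₁ g₂ := by
          have := (hEm _ _).1 hd
          rwa [hρΨ ⟨(h₁, g₁), hp₁⟩, hρΨ ⟨(h₂, g₂), hp₂⟩] at this
        have hcomp : AG.tgt g₁ = AH.src h₂ := by
          rw [AG.comp_of_dm hdG, hTI h₂, hp₂']
        have dH : AH.Dm h₁ (act g₁ h₂) := by
          apply hHGpd
          rw [(hact g₁ h₂ hcomp).2, hp₁']
        have hcondr : AH.tgt (AH.mul h₁ (act g₁ h₂)) = AG.src (AG.mul g₁ g₂) := by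
          rw [AH.tgt_mul dH, ← hTI, (hact g₁ h₂ hcomp).2, AG.src_mul hdG]
        have hρ1 : ρ (j h₁) = AG.e (AG.src g₁) := by rw [hρj, hTI, hp₁']
        have hρ2 : ρ (j h₂) = AG.e (AG.tgt g₁) := by
          rw [hρj, hTI, hp₂', AG.comp_of_dm hdG]
        have dBC : AE.Dm (s g₁) (j h₂) := hDm' (by
          rw [hρs, hρ2]; exact AG.dm_e_tgt g₁)
        have mBC : ρ (AE.mul (s g₁) (j h₂)) = g₁ := by
          rw [hρmul dBC, hρs, hρ2, AG.mul_e_tgt]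
        have dBCi : AE.Dm (AE.mul (s g₁) (j h₂)) (AE.inv (s g₁)) := hDm' (by
          rw [mBC, hρinv, hρs]; exact AG.dm_inv_right g₁)
        have mjact : ρ (AE.mul (AE.mul (s g₁) (j h₂)) (AE.inv (s g₁))) = AG.e (AG.src g₁) := by
          rw [hρmul dBCi, mBC, hρinv, hρs, AG.mul_inv_self]
        have dBD : AE.Dm (s g₁) (s g₂) := hDm' (by rw [hρs, hρs]; exact hdG)
        have mBD : ρ (AE.mul (s g₁) (s g₂)) = AG.mul g₁ g₂ := by
          rw [hρmul dBD, hρs, hρs]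
        have dXY : AE.Dm (AE.mul (AE.mul (s g₁) (j h₂)) (AE.inv (s g₁)))
            (AE.mul (s g₁) (s g₂)) := hDm' (by
          rw [mjact, mBD]; exact AG.dm_e_src' (AG.src_mul hdG))
        have dAX : AE.Dm (j h₁) (AE.mul (AE.mul (s g₁) (j h₂)) (AE.inv (s g₁))) := hDm' (by
          rw [hρ1, mjact]; exact AG.dm_e_tgt' (AG.tgt_e _))
        have t3 : AE.Dm (j h₁) (AE.mul (AE.mul (AE.mul (s g₁) (j h₂)) (AE.inv (s g₁)))
            (AE.mul (s g₁) (s g₂))) := hDm' (by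
          rw [hρ1, hρmul dXY, mjact, mBD, AG.e_src_mul' (AG.src_mul hdG)]
          exact AG.dm_e_src' (AG.src_mul hdG))
        have t5 : AE.Dm (AE.inv (s g₁)) (AE.mul (s g₁) (s g₂)) := hDm' (by
          rw [hρinv, hρs, mBD]; exact AG.dm_inv_mul hdG)
        have m5 : ρ (AE.mul (AE.inv (s g₁)) (AE.mul (s g₁) (s g₂))) = g₂ := by
          rw [hρmul t5, hρinv, hρs, mBD, AG.inv_mul_mul hdG]
        have t6 : AE.Dm (AE.mul (s g₁) (j h₂))
            (AE.mul (AE.inv (s g₁)) (AE.mul (s g₁) (s g₂))) := hDm' (by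
          rw [mBC, m5]; exact hdG)
        have e2 : AE.mul (AE.inv (s g₁)) (AE.mul (s g₁) (s g₂)) = s g₂ :=
          AE.inv_mul_mul dBD
        have dCD : AE.Dm (j h₂) (s g₂) := hDm' (by
          rw [hρ2, hρs]; exact AG.dm_e_src' (AG.comp_of_dm hdG).symm)
        have m_CD : ρ (AE.mul (j h₂) (s g₂)) = g₂ := by
          rw [hρmul dCD, hρ2, hρs, AG.e_src_mul' (AG.comp_of_dm hdG).symm]
        have dB_CD : AE.Dm (s g₁) (AE.mul (j h₂) (s g₂)) := hDm' (by
          rw [hρs, m_CD]; exact hdG)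
        have dAB : AE.Dm (j h₁) (s g₁) := hDΨ ⟨(h₁, g₁), hp₁⟩
        have dA_BCD : AE.Dm (j h₁) (AE.mul (s g₁) (AE.mul (j h₂) (s g₂))) := hDm' (by
          rw [hρ1, hρmul dB_CD, hρs, m_CD]
          exact AG.dm_e_src' (AG.src_mul hdG))
        have main : AE.mul (j (AH.mul h₁ (act g₁ h₂))) (s (AG.mul g₁ g₂)) =
            AE.mul (AE.mul (j h₁) (s g₁)) (AE.mul (j h₂) (s g₂)) := by
          rw [hj.1.map_mul dH, (hact g₁ h₂ hcomp).1, hs.1.map_mul hdG,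
            AE.mul_assoc dAX dXY t3, AE.mul_assoc dBCi t5 t6, e2,
            AE.mul_assoc dBC dCD dB_CD, AE.mul_assoc dAB dB_CD dA_BCD]
        have hΨr : AE.mul (AE.mul (j h₁) (s g₁)) (AE.mul (j h₂) (s g₂)) =
            Ψ ⟨(AH.mul h₁ (act g₁ h₂), AG.mul g₁ g₂), hcondr⟩ := main.symm
        show (Φ (AE.mul (AE.mul (j h₁) (s g₁)) (AE.mul (j h₂) (s g₂)))).val = _
        rw [hΨr, hΦΨ]
    · -- Φ spec
      exact fun x => ⟨hΦ₁ x, rfl⟩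
    · -- bijectivity
      exact ⟨fun x y hxy => by rw [← hΨΦ x, ← hΨΦ y, hxy], fun p => ⟨Ψ p, hΦΨ p⟩⟩
    · -- Φ morphism over id
      refine ⟨⟨fun m => ⟨m, rfl⟩, ?_, ?_⟩, ?_⟩
      · intro x y hd
        show AE.Dm (Ψ (Φ x)) (Ψ (Φ y))
        rw [hΨΦ, hΨΦ]; exact hd
      · intro x y hd
        show Φ (AE.mul x y) = Φ (AE.mul (Ψ (Φ x)) (Ψ (Φ y)))
        rw [hΨΦ, hΨΦ]
      · intro m
        show AE.src (Ψ (Φ (AE.e m))) = m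
        rw [hΨΦ, AE.src_e]
    · -- inverse is a morphism
      intro ψ hl hr
      have hψ : ∀ p, ψ p = Ψ p := by
        intro p
        have := hl (Ψ p)
        rwa [hΦΨ p] at this
      refine ⟨⟨fun m => ⟨m, ?_⟩, ?_, ?_⟩, ?_⟩
      · show ψ (Φ (AE.e m)) = AE.e m
        rw [hl]
      · intro p q hd
        rw [hψ, hψ]
        exact hd
      · intro p q hd
        show ψ (Φ (AE.mul (Ψ p) (Ψ q))) = AE.mul (ψ p) (ψ q)
        rw [hl, hψ, hψ]
      · intro m
        show AE.src (ψ (Φ (AE.e m))) = m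
        rw [hl, AE.src_e]
    · -- Φ ∘ j = sdJ
      intro h
      apply Subtype.ext
      have h2 : ρ (j h) = AG.e (AH.tgt h) := by rw [hρj, hTI]
      have h1 : Φ₁ (j h) = h := by
        apply hjinj
        rw [hΦ₁, h2, AG.inv_e, moi_map_e hs,
          AE.mul_e_tgt' (by rw [moi_tgt hj])]
      show (Φ₁ (j h), ρ (j h)) = (h, AG.e (AH.tgt h))
      rw [h1, h2]
    · -- ρ compatibility
      exact fun x => rfl
    · -- recovering s
      intro ψ hl hr
      funext g
      have hψ : ψ (sdS AH AG g) = Ψ (sdS AH AG g) := by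
        have := hl (Ψ (sdS AH AG g))
        rwa [hΦΨ] at this
      rw [hψ]
      show AE.mul (j (AH.e (AG.src g))) (s g) = s g
      rw [moi_map_e hj, AE.e_src_mul' (moi_src hs g)]
  · -- backward direction
    intro act P Φ ψ hact hsd hΦm hΦbij hl hr hψm hΦj hΦρ
    obtain ⟨hPsrc, hPtgt, hPe, hPinv, hPdm, hPmul⟩ := hsd
    obtain ⟨ha1, ha2, ha3, ha4⟩ := hact
    have hρψ : ∀ p : SDCarrier AH AG, ρ (ψ p) = p.val.2 := by
      intro p
      have h0 := hΦρ (ψ p)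
      rw [hr p] at h0
      exact h0.symm
    have hρt : ∀ g, ρ (ψ (sdS AH AG g)) = g := fun g => hρψ (sdS AH AG g)
    have hΦe : ∀ m, Φ (AE.e m) = P.e m := fun m => moi_map_e hΦm m
    have hte : ∀ m, ψ (sdS AH AG (AG.e m)) = AE.e m := by
      intro m
      have h1 : sdS AH AG (AG.e m) = P.e m := by
        apply Subtype.ext
        rw [hPe]
        show (AH.e (AG.src (AG.e m)), AG.e m) = (AH.e m, AG.e m)
        rw [AG.src_e]
      rw [h1, ← hΦe, hl]
    have act_e : ∀ g m, AG.tgt g = m → act g (AH.e m) = AH.e (AG.src g) := by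
      intro g m hm
      have hc : AG.tgt g = AH.src (AH.e m) := by rw [AH.src_e, hm]
      have hx1 : AH.src (act g (AH.e m)) = AG.src g := ha1 g _ hc
      have h3 := ha3 g (AH.e m) (AH.e m) hc (by rw [AH.tgt_e, AH.src_e])
      rw [AH.mul_e_tgt' (AH.tgt_e m)] at h3
      have hdxx : AH.Dm (act g (AH.e m)) (act g (AH.e m)) := hHGpd _ _ (by rw [← hTI])
      have h4 := AH.inv_mul_mul hdxx
      rw [← h3, AH.inv_mul_self] at h4
      calc act g (AH.e m) = AH.e (AH.tgt (act g (AH.e m))) := h4.symm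
        _ = AH.e (AH.src (act g (AH.e m))) := by rw [hTI]
        _ = AH.e (AG.src g) := by rw [hx1]
    have hDm' : ∀ {x y : EC}, AG.Dm (ρ x) (ρ y) → AE.Dm x y := fun {x y} hd => (hEm x y).2 hd
    refine ⟨⟨⟨fun m => ⟨m, hte m⟩, ?_, ?_⟩, ?_⟩, hρt, ?_, ?_⟩
    · -- dm of the splitting
      intro g₁ g₂ hd
      exact hψm.1.dm ((hPdm _ _).2 hd)
    · -- map_mul of the splitting
      intro g₁ g₂ hd
      have hPd : P.Dm (sdS AH AG g₁) (sdS AH AG g₂) := (hPdm _ _).2 hd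
      have h1 : P.mul (sdS AH AG g₁) (sdS AH AG g₂) = sdS AH AG (AG.mul g₁ g₂) := by
        apply Subtype.ext
        rw [hPmul _ _ hPd]
        show (AH.mul (AH.e (AG.src g₁)) (act g₁ (AH.e (AG.src g₂))), AG.mul g₁ g₂) =
          (AH.e (AG.src (AG.mul g₁ g₂)), AG.mul g₁ g₂)
        rw [act_e g₁ _ (AG.comp_of_dm hd), AH.mul_e_tgt' (AH.tgt_e _), AG.src_mul hd]
      show ψ (sdS AH AG (AG.mul g₁ g₂)) = AE.mul (ψ (sdS AH AG g₁)) (ψ (sdS AH AG g₂))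
      rw [← h1, hψm.1.map_mul hPd]
    · -- over id
      intro m
      show AE.src (ψ (sdS AH AG (AG.e m))) = m
      rw [hte, AE.src_e]
    · -- conjugation formula
      intro g h hc
      have hρjh : ρ (j h) = AG.e (AG.tgt g) := by rw [hρj, ← hc]
      have d1 : AE.Dm (ψ (sdS AH AG g)) (j h) := hDm' (by
        rw [hρt, hρjh]; exact AG.dm_e_tgt g)
      have m1 : ρ (AE.mul (ψ (sdS AH AG g)) (j h)) = g := by
        rw [hρmul d1, hρt, hρjh, AG.mul_e_tgt]
      have d2 : AE.Dm (AE.mul (ψ (sdS AH AG g)) (j h)) (AE.inv (ψ (sdS AH AG g))) :=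
        hDm' (by rw [m1, hρinv, hρt]; exact AG.dm_inv_right g)
      apply hΦbij.1
      rw [hΦj, hΦm.1.map_mul d2, hΦm.1.map_mul d1, moi_inv hΦm, hr (sdS AH AG g), hΦj]
      have hdX : P.Dm (sdS AH AG g) (sdJ AH AG h) := (hPdm _ _).2 (by
        show AG.Dm g (AG.e (AH.tgt h))
        exact AG.dm_e_tgt' (by rw [hc, hTI]))
      have hXval : (P.mul (sdS AH AG g) (sdJ AH AG h)).val = (act g h, g) := by
        rw [hPmul _ _ hdX]
        show (AH.mul (AH.e (AG.src g)) (act g h), AG.mul g (AG.e (AH.tgt h))) = _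
        rw [AH.e_src_mul' (ha1 g h hc), AG.mul_e_tgt' (show AG.tgt g = AH.tgt h by
          rw [hc, hTI])]
      have hYval : (P.inv (sdS AH AG g)).val = (AH.e (AG.tgt g), AG.inv g) := by
        rw [hPinv]
        show (AH.inv (act (AG.inv g) (AH.e (AG.src g))), AG.inv g) = _
        rw [act_e (AG.inv g) _ (AG.tgt_inv' g), AG.src_inv', AH.inv_e]
      have hdZ : P.Dm (P.mul (sdS AH AG g) (sdJ AH AG h)) (P.inv (sdS AH AG g)) :=
        (hPdm _ _).2 (by rw [hXval, hYval]; exact AG.dm_inv_right g)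
      apply Subtype.ext
      rw [hPmul _ _ hdZ, hXval, hYval]
      show (act g h, AG.e (AH.tgt (act g h))) =
        (AH.mul (act g h) (act g (AH.e (AG.tgt g))), AG.mul g (AG.inv g))
      rw [act_e g _ rfl, AH.mul_e_tgt' (by rw [← hTI]; exact ha1 g h hc),
        AG.mul_inv_self, ← hTI, ha1 g h hc]
    · -- the Φ formula
      intro x
      have hg : (Φ x).val.2 = ρ x := hΦρ x
      have d : AE.Dm x (ψ (sdS AH AG (AG.inv (ρ x)))) := hDm' (by
        rw [hρt]; exact AG.dm_inv_right (ρ x))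
      have hdP : P.Dm (Φ x) (sdS AH AG (AG.inv (ρ x))) := (hPdm _ _).2 (by
        show AG.Dm (Φ x).val.2 (AG.inv (ρ x))
        rw [hg]; exact AG.dm_inv_right (ρ x))
      have htgt1 : AH.tgt (Φ x).val.1 = AG.src (ρ x) := by
        have h5 := (Φ x).prop
        rw [hg] at h5
        exact h5
      apply hΦbij.1
      rw [hΦj, hΦm.1.map_mul d, hr (sdS AH AG (AG.inv (ρ x)))]
      apply Subtype.ext
      rw [hPmul _ _ hdP]
      show ((Φ x).val.1, AG.e (AH.tgt (Φ x).val.1)) =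
        (AH.mul (Φ x).val.1 (act (Φ x).val.2 (AH.e (AG.src (AG.inv (ρ x))))),
          AG.mul (Φ x).val.2 (AG.inv (ρ x)))
      rw [hg, AG.src_inv', act_e (ρ x) _ rfl, AH.mul_e_tgt' htgt1,
        AG.mul_inv_self, htgt1]
end

section
/- Let • be an external action of a local groupoid G over M on a totally intransitive groupoid H over M, and let P := H ⋊ G be the semidirect product. Define j_⋊ : H → P by j_⋊(h) := (h, ε_G(β_H(h))), ρ_⋊ : P → G by ρ_⋊(h,g) := g, and s_⋊ : G → P by s_⋊(g) := (ε_H(α_G(g)), g). Then: (1) j_⋊ is an injective morphism of local groupoids over id_M and (j_⋊ × j_⋊)⁻¹(P_m) ⊆ H_m; (2) ρ_⋊ is a surjective morphism of local groupoids over id_M; (3) j_⋊(H) = ρ_⋊⁻¹(ε_G(M)); (4) P_m = (ρ_⋊ × ρ_⋊)⁻¹(G_m); (5) s_⋊ is a morphism of local groupoids over id_M with ρ_⋊ ∘ s_⋊ = id_G. -/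
-- Auxiliary lemmas

theorem aux_tgt_mul {M G : Type*} (A : LocalGroupoid M G) {g₁ g₂ : G} (h : A.Dm g₁ g₂) :
    A.tgt (A.mul g₁ g₂) = A.tgt g₂ := by
  have h1 : A.Dm g₂ (A.e (A.tgt g₂)) := A.dm_e_tgt g₂
  have h2 : A.Dm g₁ (A.mul g₂ (A.e (A.tgt g₂))) := by rw [A.mul_e_tgt]; exact h
  have h3 := A.dm_assoc h h1 h2
  have := A.comp_of_dm h3
  rwa [A.src_e] at this

theorem aux_src_mul {M G : Type*} (A : LocalGroupoid M G) {g₁ g₂ : G} (h : A.Dm g₁ g₂) :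
    A.src (A.mul g₁ g₂) = A.src g₁ := by
  have h1 : A.tgt (A.inv (A.mul g₁ g₂)) = A.src (A.mul g₁ g₂) :=
    A.comp_of_dm (A.dm_inv_left _)
  have h2 : A.tgt (A.inv g₁) = A.src g₁ := A.comp_of_dm (A.dm_inv_left _)
  rw [← h1, ← A.mul_inv_inv h, aux_tgt_mul A (A.dm_inv_inv h), h2]

theorem aux_act_e {M HC GC : Type*} {AH : LocalGroupoid M HC} {AG : LocalGroupoid M GC}
    (hTI : LocalGroupoid.TotallyIntransitive AH)
    (hHGpd : LocalGroupoid.IsGroupoid AH)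
    {act : GC → HC → HC} (hact : LocalGroupoid.IsExternalAction AG AH act)
    (g : GC) : act g (AH.e (AG.tgt g)) = AH.e (AG.src g) := by
  obtain ⟨h1, _h2, h3, _h4⟩ := hact
  set m := AG.tgt g with hm
  set x := act g (AH.e m) with hx
  have hsrc : AH.src x = AG.src g := h1 g _ (AH.src_e m).symm
  have hidem : AH.mul x x = x := by
    have : AH.mul (AH.e m) (AH.e m) = AH.e m := by
      have := AH.e_src_mul (AH.e m); rwa [AH.src_e] at this
    rw [hx, ← h3 g _ _ (AH.src_e m).symm (by rw [AH.tgt_e, AH.src_e]), this]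
  -- x idempotent in a totally intransitive groupoid implies x = e (src x)
  have hd1 : AH.Dm x x := hHGpd x x (hTI x).symm
  have hd2 : AH.Dm x (AH.inv x) := AH.dm_inv_right x
  have hd3 : AH.Dm x (AH.mul x (AH.inv x)) := by
    rw [AH.mul_inv_self]; exact hHGpd _ _ (by rw [AH.src_e, hTI x])
  have hassoc := AH.mul_assoc hd1 hd2 hd3
  rw [hidem, AH.mul_inv_self, hTI x, AH.mul_e_tgt] at hassoc
  rw [← hsrc, hTI x]
  exact hassoc.symm

/-- The semidirect product sequence `H →(j_⋊) H ⋊ G →(ρ_⋊) G` is a split extension of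
local groupoids over `M`: `j_⋊` is an injective morphism reflecting multiplicability,
`ρ_⋊` is a surjective morphism, `j_⋊(H) = ρ_⋊⁻¹(ε_G(M))`,
`P_m = (ρ_⋊ × ρ_⋊)⁻¹(G_m)`, and `s_⋊` is a splitting. -/
theorem semidirect_product_extension {M HC GC : Type*}
    (AH : LocalGroupoid M HC) (AG : LocalGroupoid M GC)
    (hTI : LocalGroupoid.TotallyIntransitive AH)
    (hHGpd : LocalGroupoid.IsGroupoid AH)
    (act : GC → HC → HC) (hact : LocalGroupoid.IsExternalAction AG AH act)
    (P : LocalGroupoid M (SDCarrier AH AG)) (hP : IsSemidirectProduct AH AG act P) :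
    (LocalGroupoid.IsMorphismOverId AH P (sdJ AH AG) ∧
      Function.Injective (sdJ AH AG) ∧
      (∀ h₁ h₂, P.Dm (sdJ AH AG h₁) (sdJ AH AG h₂) → AH.Dm h₁ h₂)) ∧
    (LocalGroupoid.IsMorphismOverId P AG (sdRho AH AG) ∧
      Function.Surjective (sdRho AH AG)) ∧
    (∀ p, (∃ h, sdJ AH AG h = p) ↔ (∃ m, sdRho AH AG p = AG.e m)) ∧
    (∀ p₁ p₂, P.Dm p₁ p₂ ↔ AG.Dm (sdRho AH AG p₁) (sdRho AH AG p₂)) ∧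
    (LocalGroupoid.IsMorphismOverId AG P (sdS AH AG) ∧
      ∀ g, sdRho AH AG (sdS AH AG g) = g) := by
  obtain ⟨hsrc, htgt, he, hinv, hdm, hmul⟩ := hP
  obtain ⟨ha1, ha2, ha3, ha4⟩ := hact
  have hJe : ∀ m, sdJ AH AG (AH.e m) = P.e m := by
    intro m
    apply Subtype.ext
    rw [he m]
    simp [sdJ, AH.tgt_e]
  have hSe : ∀ m, sdS AH AG (AG.e m) = P.e m := by
    intro m
    apply Subtype.ext
    rw [he m]
    simp [sdS, AG.src_e]
  refine ⟨⟨⟨⟨?_, ?_, ?_⟩, ?_⟩, ?_, ?_⟩, ⟨⟨⟨?_, ?_, ?_⟩, ?_⟩, ?_⟩, ?_, ?_, ⟨⟨?_, ?_, ?_⟩, ?_⟩, ?_⟩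
  · -- j maps_e
    exact fun m => ⟨m, hJe m⟩
  · -- j dm
    intro h₁ h₂ hd
    rw [hdm]
    have h12 : AH.tgt h₁ = AH.tgt h₂ := by
      rw [AH.comp_of_dm hd, hTI h₂]
    show AG.Dm (AG.e (AH.tgt h₁)) (AG.e (AH.tgt h₂))
    rw [h12]
    have := AG.dm_e_src (AG.e (AH.tgt h₂))
    rwa [AG.src_e] at this
  · -- j map_mul
    intro h₁ h₂ hd
    have hPd : P.Dm (sdJ AH AG h₁) (sdJ AH AG h₂) := by
      rw [hdm]
      show AG.Dm (AG.e (AH.tgt h₁)) (AG.e (AH.tgt h₂))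
      rw [AH.comp_of_dm hd, hTI h₂]
      have := AG.dm_e_src (AG.e (AH.tgt h₂))
      rwa [AG.src_e] at this
    apply Subtype.ext
    rw [hmul _ _ hPd]
    show (AH.mul h₁ h₂, AG.e (AH.tgt (AH.mul h₁ h₂))) =
      (AH.mul h₁ (act (AG.e (AH.tgt h₁)) h₂), AG.mul (AG.e (AH.tgt h₁)) (AG.e (AH.tgt h₂)))
    have hc := AH.comp_of_dm hd
    have hact4 : act (AG.e (AH.tgt h₁)) h₂ = h₂ := by rw [hc]; exact ha4 h₂
    have h12 : AH.tgt h₁ = AH.tgt h₂ := by rw [hc, hTI h₂]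
    have hee : AG.mul (AG.e (AH.tgt h₁)) (AG.e (AH.tgt h₂)) = AG.e (AH.tgt h₂) := by
      rw [h12]
      have := AG.e_src_mul (AG.e (AH.tgt h₂))
      rwa [AG.src_e] at this
    rw [hact4, hee, aux_tgt_mul AH hd]
  · -- j over id
    intro m
    rw [hJe m, hsrc, he m, AG.src_e]
  · -- j injective
    intro h₁ h₂ h
    exact congrArg (fun p => p.val.1) h
  · -- j reflects Dm
    intro h₁ h₂ hd
    rw [hdm] at hd
    have := AG.comp_of_dm hd
    apply hHGpd
    show AH.tgt h₁ = AH.src h₂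
    rw [hTI h₂]
    have : AG.tgt (AG.e (AH.tgt h₁)) = AG.src (AG.e (AH.tgt h₂)) := this
    rwa [AG.tgt_e, AG.src_e] at this
  · -- ρ maps_e
    intro m
    refine ⟨m, ?_⟩
    show (P.e m).val.2 = AG.e m
    rw [he m]
  · -- ρ dm
    intro p₁ p₂ hd
    exact (hdm p₁ p₂).1 hd
  · -- ρ map_mul
    intro p₁ p₂ hd
    show (P.mul p₁ p₂).val.2 = AG.mul p₁.val.2 p₂.val.2
    rw [hmul _ _ hd]
  · -- ρ over id
    intro m
    show AG.src (P.e m).val.2 = m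
    rw [he m, AG.src_e]
  · -- ρ surjective
    intro g
    exact ⟨sdS AH AG g, rfl⟩
  · -- image of j = preimage of units
    intro p
    constructor
    · rintro ⟨h, rfl⟩
      exact ⟨AH.tgt h, rfl⟩
    · rintro ⟨m, hm⟩
      refine ⟨p.val.1, ?_⟩
      apply Subtype.ext
      have hmm : AH.tgt p.val.1 = m := by
        rw [p.property]
        show AG.src (sdRho AH AG p) = m
        rw [hm, AG.src_e]
      show (p.val.1, AG.e (AH.tgt p.val.1)) = p.val
      rw [hmm, ← hm]
      exact Prod.ext rfl rfl
  · -- P_m = preimage of G_m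
    exact hdm
  · -- s maps_e
    exact fun m => ⟨m, hSe m⟩
  · -- s dm
    intro g₁ g₂ hd
    rw [hdm]
    exact hd
  · -- s map_mul
    intro g₁ g₂ hd
    have hPd : P.Dm (sdS AH AG g₁) (sdS AH AG g₂) := by rw [hdm]; exact hd
    apply Subtype.ext
    rw [hmul _ _ hPd]
    show (AH.e (AG.src (AG.mul g₁ g₂)), AG.mul g₁ g₂) =
      (AH.mul (AH.e (AG.src g₁)) (act g₁ (AH.e (AG.src g₂))), AG.mul g₁ g₂)
    have : act g₁ (AH.e (AG.src g₂)) = AH.e (AG.src g₁) := by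
      rw [← AG.comp_of_dm hd]
      exact aux_act_e hTI hHGpd ⟨ha1, ha2, ha3, ha4⟩ g₁
    rw [this, aux_src_mul AG hd]
    have := AH.e_src_mul (AH.e (AG.src g₁))
    rw [AH.src_e] at this
    rw [this]
  · -- s over id
    intro m
    rw [hSe m, hsrc, he m, AG.src_e]
  · -- ρ ∘ s = id
    intro g
    rfl
end
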